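/- For x > 1 and every positive integer k, (2/π) ∫_{0}^{π} log(1 - cos θ / x) · cos(k θ) dθ = -2 νᵏ / k, where ν := x - √(x² - 1). -/

import Mathlib

/-!
With `ν = x - √(x² - 1)` one has `ν² + 1 = 2xν`, hence
`1 - cos θ / x = |1 - ν e^{iθ}|² / (2xν)`. Taking the real part of
`-log (1 - z) = ∑ zⁿ / n` at `z = ν e^{iθ}` gives the Fourier expansion
`log (1 - cos θ / x) = -log (2xν) - 2 ∑_{n ≥ 1} νⁿ cos (nθ) / n`, uniformly convergent since
`0 < ν < 1`. Integrating term by term against `cos (kθ)` over `[0, π]`, orthogonality leaves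
only the term `n = k`.
-/

open Real intervalIntegral

lemma sub_sqrt_sq_sub_one_pos {x : ℝ} (hx : 1 < x) : 0 < x - √(x ^ 2 - 1) :=
  sub_pos.2 <| (sqrt_lt' (by linarith)).2 (by linarith)

lemma sub_sqrt_sq_sub_one_lt_one {x : ℝ} (hx : 1 < x) : x - √(x ^ 2 - 1) < 1 := by
  have : x - 1 < √(x ^ 2 - 1) := (lt_sqrt (by linarith)).2 (by nlinarith)
  linarith

lemma sub_sqrt_sq_sub_one_sq_add_one {x : ℝ} (hx : 1 ≤ x) :
    (x - √(x ^ 2 - 1)) ^ 2 + 1 = 2 * x * (x - √(x ^ 2 - 1)) := by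
  have := sq_sqrt (by nlinarith : 0 ≤ x ^ 2 - 1)
  nlinarith

lemma log_one_sub_cos_div {x ν : ℝ} (hx : 1 < x) (hν : 0 < ν) (hxν : ν ^ 2 + 1 = 2 * x * ν)
    (θ : ℝ) : log (1 - cos θ / x) = log (1 - 2 * ν * cos θ + ν ^ 2) - log (2 * x * ν) := by
  have hnum : 1 - 2 * ν * cos θ + ν ^ 2 = 2 * ν * (x - cos θ) := by linarith
  have hcos : 0 < x - cos θ := by linarith [cos_le_one θ]
  rw [← log_div (by rw [hnum]; positivity) (by positivity), hnum]
  congr 1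
  field_simp

lemma one_sub_two_mul_cos_add_sq_pos {ν : ℝ} (hν : |ν| < 1) (θ : ℝ) :
    0 < 1 - 2 * ν * cos θ + ν ^ 2 := by
  have hcos : ν * cos θ ≤ |ν| := (le_abs_self _).trans <| by
    rw [abs_mul]; exact mul_le_of_le_one_right (abs_nonneg ν) (abs_cos_le_one θ)
  nlinarith [sq_abs ν, abs_nonneg ν]

lemma integral_cos_int_mul (m : ℤ) :
    ∫ θ in (0 : ℝ)..π, cos (m * θ) = if m = 0 then π else 0 := by
  rcases eq_or_ne m 0 with rfl | hm
  · simp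
  · rw [if_neg hm, integral_comp_mul_left cos (Int.cast_ne_zero.mpr hm)]
    simp [sin_int_mul_pi]

lemma integral_cos_nat_mul_mul_cos_nat_mul (n : ℕ) {k : ℕ} (hk : 0 < k) :
    ∫ θ in (0 : ℝ)..π, cos (n * θ) * cos (k * θ) = if n = k then π / 2 else 0 := by
  have hprod (θ : ℝ) : cos (n * θ) * cos (k * θ) =
      (cos (((n - k : ℤ) : ℝ) * θ) + cos (((n + k : ℤ) : ℝ) * θ)) / 2 := by
    push_cast
    rw [sub_mul, add_mul, ← two_mul_cos_mul_cos]
    ring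
  simp_rw [hprod]
  rw [integral_div, integral_add (Continuous.intervalIntegrable (by fun_prop) _ _)
    (Continuous.intervalIntegrable (by fun_prop) _ _), integral_cos_int_mul,
    integral_cos_int_mul, if_neg (by positivity : (n + k : ℤ) ≠ 0)]
  by_cases h : n = k
  · simp [h]
  · simp [h, sub_eq_zero]

-- The `n = 0` term vanishes because `x / 0 = 0` in `ℝ`.
lemma hasSum_log_one_sub_two_mul_cos_add_sq {ν : ℝ} (hν : |ν| < 1) (θ : ℝ) :
    HasSum (fun n : ℕ => -2 * (ν ^ n * cos (n * θ) / n)) (log (1 - 2 * ν * cos θ + ν ^ 2)) := by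
  set z : ℂ := ν * Complex.exp (θ * Complex.I)
  have hz : ‖z‖ < 1 := by simpa [z, Complex.norm_exp_ofReal_mul_I] using hν
  have hterm (n : ℕ) : (z ^ n / n).re = ν ^ n * cos (n * θ) / n := by
    have harg : (n : ℂ) * (θ * Complex.I) = ((n * θ : ℝ) : ℂ) * Complex.I := by push_cast; ring
    rw [mul_pow, ← Complex.exp_nat_mul, harg, ← Complex.ofReal_pow, Complex.div_natCast_re,
      Complex.re_ofReal_mul, Complex.exp_ofReal_mul_I_re]
  have hnormSq : Complex.normSq (1 - z) = 1 - 2 * ν * cos θ + ν ^ 2 := by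
    simp only [Complex.normSq_apply, Complex.sub_re, Complex.sub_im, Complex.one_re, Complex.one_im,
      z, Complex.re_ofReal_mul, Complex.im_ofReal_mul, Complex.exp_ofReal_mul_I_re,
      Complex.exp_ofReal_mul_I_im]
    nlinarith [sin_sq_add_cos_sq θ]
  have hlog : 2 * (Complex.log (1 - z)).re = log (1 - 2 * ν * cos θ + ν ^ 2) := by
    rw [Complex.log_re, ← hnormSq, ← Complex.sq_norm, log_pow]
    push_cast; ring
  have := (Complex.hasSum_re (Complex.hasSum_taylorSeries_neg_log hz)).mul_left (-2)
  simp only [hterm, Complex.neg_re] at this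
  rwa [mul_neg, neg_mul, neg_neg, hlog] at this

lemma integral_log_one_sub_two_mul_cos_add_sq_mul_cos {ν : ℝ} (hν : |ν| < 1) {k : ℕ}
    (hk : 0 < k) :
    ∫ θ in (0 : ℝ)..π, log (1 - 2 * ν * cos θ + ν ^ 2) * cos (k * θ) = -π * ν ^ k / k := by
  have hsum : HasSum
      (fun n : ℕ => ∫ θ in (0 : ℝ)..π, -2 * (ν ^ n / n) * (cos (n * θ) * cos (k * θ)))
      (∫ θ in (0 : ℝ)..π, log (1 - 2 * ν * cos θ + ν ^ 2) * cos (k * θ)) := by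
    refine hasSum_integral_of_dominated_convergence (fun n _ => 2 * |ν| ^ n)
      (fun n => by fun_prop) (fun n => .of_forall fun θ _ => ?_)
      (.of_forall fun _ _ => (summable_geometric_of_lt_one (abs_nonneg ν) hν).mul_left 2)
      intervalIntegrable_const (.of_forall fun θ _ => ?_)
    · have hcoef : |ν| ^ n / n ≤ |ν| ^ n := by
        rcases n.eq_zero_or_pos with rfl | hn
        · simp
        · exact div_le_self (by positivity) (by exact_mod_cast hn)
      calc ‖-2 * (ν ^ n / n) * (cos (n * θ) * cos (k * θ))‖
          = 2 * (|ν| ^ n / n) * (|cos (n * θ)| * |cos (k * θ)|) := by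
            simp only [norm_mul, norm_neg, norm_div, norm_pow, Real.norm_eq_abs, Nat.abs_cast]
            norm_num
        _ ≤ 2 * |ν| ^ n * (1 * 1) := by gcongr <;> exact abs_cos_le_one _
        _ = 2 * |ν| ^ n := by ring
    · exact ((hasSum_log_one_sub_two_mul_cos_add_sq hν θ).mul_right (cos (k * θ))).congr_fun
        fun n => by ring
  have hterm (n : ℕ) : ∫ θ in (0 : ℝ)..π, -2 * (ν ^ n / n) * (cos (n * θ) * cos (k * θ)) =
      if n = k then -π * ν ^ k / k else 0 := by
    rw [integral_const_mul, integral_cos_nat_mul_mul_cos_nat_mul n hk]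
    split_ifs with h
    · subst h; ring
    · simp
  simp only [hterm] at hsum
  exact hsum.unique (hasSum_ite_eq k _)

theorem stmt_6 (x : ℝ) (hx : 1 < x) (ν : ℝ) (hν : ν = x - Real.sqrt (x ^ 2 - 1))
    (k : ℕ) (hk : 0 < k) :
    (2 / π) * ∫ θ in (0 : ℝ)..π, Real.log (1 - Real.cos θ / x) * Real.cos (k * θ) =
      -2 * ν ^ k / k := by
  have hν0 : 0 < ν := hν ▸ sub_sqrt_sq_sub_one_pos hx
  have hν1 : |ν| < 1 := abs_lt.2 ⟨by linarith, hν ▸ sub_sqrt_sq_sub_one_lt_one hx⟩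
  have hxν : ν ^ 2 + 1 = 2 * x * ν := hν ▸ sub_sqrt_sq_sub_one_sq_add_one hx.le
  have hcont : Continuous fun θ => log (1 - 2 * ν * cos θ + ν ^ 2) * cos (k * θ) :=
    ((by fun_prop : Continuous fun θ => 1 - 2 * ν * cos θ + ν ^ 2).log
      fun θ => (one_sub_two_mul_cos_add_sq_pos hν1 θ).ne').mul (by fun_prop)
  have hconst : ∫ θ in (0 : ℝ)..π, cos (k * θ) = 0 := by
    simp [hk.ne']
  simp_rw [log_one_sub_cos_div hx hν0 hxν, sub_mul]
  rw [integral_sub (hcont.intervalIntegrable _ _)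
    (Continuous.intervalIntegrable (by fun_prop) _ _), integral_const_mul, hconst,
    integral_log_one_sub_two_mul_cos_add_sq_mul_cos hν1 hk]
  field_simp
  ring
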